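/- arXiv:2202.00461 — 2 statements merged into one kernel-verified Lean document; each statement's English description precedes it below -/
import Mathlib

section
/- Let n = n_1 n_2 be an odd integer where n_1 = ∏_{i=1}^r p_i^{e_i} with all primes p_i ≡ 1 (mod 3), and n_2 = ∏_{j=1}^s q_j^{f_j} with all primes q_j ≡ 2 (mod 3). Then D_{T_n}(Z/nZ) ≥ 2Ω(n_1) + Ω(n_2) + 1. -/
open Finset

open scoped Classical

/-- `Tset n` is the set of cubes of units in `ZMod n`. -/
def Tset (n : ℕ) : Set (ZMod n) := {x | ∃ u : (ZMod n)ˣ, ((u : ZMod n)) ^ 3 = x}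

/-- A family `x : ι → ZMod n` has a nonempty `A`-weighted zero-sum subsequence. -/
def HasWZS {n : ℕ} {ι : Type} (A : Set (ZMod n)) (x : ι → ZMod n) : Prop :=
  ∃ I : Finset ι, I.Nonempty ∧ ∃ a : ι → ZMod n, (∀ i ∈ I, a i ∈ A) ∧ ∑ i ∈ I, a i * x i = 0

/-- The weighted Davenport constant `D_A(ZMod n)`. -/
noncomputable def DavA (n : ℕ) (A : Set (ZMod n)) : ℕ :=
  sInf {ℓ : ℕ | 0 < ℓ ∧ ∀ x : Fin ℓ → ZMod n, HasWZS A x}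

/-- A family has an `A`-weighted zero-sum subsequence of length exactly `m`. -/
def HasWZSLen {n : ℕ} {ι : Type} (A : Set (ZMod n)) (x : ι → ZMod n) (m : ℕ) : Prop :=
  ∃ I : Finset ι, I.card = m ∧ ∃ a : ι → ZMod n, (∀ i ∈ I, a i ∈ A) ∧ ∑ i ∈ I, a i * x i = 0

/-- The constant `E_A(ZMod n)`. -/
noncomputable def EA (n : ℕ) (A : Set (ZMod n)) : ℕ :=
  sInf {ℓ : ℕ | 0 < ℓ ∧ ∀ x : Fin ℓ → ZMod n, HasWZSLen A x n}

/-- An `A`-extremal sequence: length `D_A - 1` with no nonempty `A`-weighted zero-sum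
subsequence. -/
def IsExtremal {n : ℕ} {ι : Type} [Fintype ι] (A : Set (ZMod n)) (x : ι → ZMod n) : Prop :=
  Fintype.card ι + 1 = DavA n A ∧ ¬ HasWZS A x

/-- `Omega n` is the number of prime factors of `n` counted with multiplicity. -/
def Omega (n : ℕ) : ℕ := n.primeFactorsList.length

lemma one_mem_Tset (n : ℕ) : (1 : ZMod n) ∈ Tset n := ⟨1, by simp⟩

lemma tset_map {n m : ℕ} (f : ZMod n →+* ZMod m) {x : ZMod n} (hx : x ∈ Tset n) :
    f x ∈ Tset m := by
  obtain ⟨u, hu⟩ := hx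
  exact ⟨Units.map f.toMonoidHom u, by
    rw [Units.coe_map]; simp [← hu, ← map_pow]⟩

lemma tset_ne_zero {p : ℕ} (hp : p.Prime) {x : ZMod p} (hx : x ∈ Tset p) : x ≠ 0 := by
  haveI : Fact p.Prime := ⟨hp⟩
  obtain ⟨u, hu⟩ := hx
  subst hu
  exact pow_ne_zero _ (Units.ne_zero u)

lemma hasWZS_of_comp {n : ℕ} {ι κ : Type} {A : Set (ZMod n)} {x : ι → ZMod n} (f : κ → ι)
    (hf : Function.Injective f) : HasWZS A (x ∘ f) → HasWZS A x := by
  rintro ⟨I, hne, a, ha, hsum⟩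
  refine ⟨I.map ⟨f, hf⟩, hne.map,
    fun i => if h : ∃ j, f j = i then a h.choose else 1, ?_, ?_⟩
  · intro i hi
    simp only [Finset.mem_map, Function.Embedding.coeFn_mk] at hi
    obtain ⟨j, hj, rfl⟩ := hi
    show (if h : ∃ j', f j' = f j then a h.choose else (1 : ZMod n)) ∈ A
    rw [dif_pos ⟨j, rfl⟩]
    have : (⟨j, rfl⟩ : ∃ j', f j' = f j).choose = j :=
      hf ((⟨j, rfl⟩ : ∃ j', f j' = f j).choose_spec)
    rw [this]; exact ha j hj
  · rw [Finset.sum_map, ← hsum]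
    refine Finset.sum_congr rfl fun j hj => ?_
    simp only [Function.Embedding.coeFn_mk]
    show (if h : ∃ j', f j' = f j then a h.choose else (1 : ZMod n)) * x (f j) = a j * (x ∘ f) j
    rw [dif_pos ⟨j, rfl⟩]
    have : (⟨j, rfl⟩ : ∃ j', f j' = f j).choose = j :=
      hf ((⟨j, rfl⟩ : ∃ j', f j' = f j).choose_spec)
    rw [this]; rfl

lemma exists_wzs (n : ℕ) (hn : 0 < n) (x : Fin n → ZMod n) : HasWZS (Tset n) x := by
  haveI : NeZero n := ⟨hn.ne'⟩
  set s : Fin (n + 1) → ZMod n :=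
    fun j => ∑ i ∈ Finset.univ.filter (fun i : Fin n => (i : ℕ) < (j : ℕ)), x i with hs
  have hninj : ¬ Function.Injective s := by
    intro hinj
    have := Fintype.card_le_of_injective s hinj
    simp [ZMod.card] at this
  rw [Function.not_injective_iff] at hninj
  obtain ⟨j1, j2, hs12, hne⟩ := hninj
  wlog hlt : (j1 : ℕ) < (j2 : ℕ) generalizing j1 j2
  · exact this j2 j1 hs12.symm (Ne.symm hne) (by
      have : (j1 : ℕ) ≠ (j2 : ℕ) := fun hh => hne (Fin.ext hh)
      omega)
  refine ⟨Finset.univ.filter (fun i : Fin n => (j1 : ℕ) ≤ (i : ℕ) ∧ (i : ℕ) < (j2 : ℕ)),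
    ⟨⟨(j1 : ℕ), by omega⟩, by simp; exact hlt⟩, fun _ => 1, fun i _ => one_mem_Tset n, ?_⟩
  have hsub : Finset.univ.filter (fun i : Fin n => (i : ℕ) < (j1 : ℕ)) ⊆
      Finset.univ.filter (fun i : Fin n => (i : ℕ) < (j2 : ℕ)) := by
    intro i hi; simp at hi ⊢; omega
  have hsd : Finset.univ.filter (fun i : Fin n => (i : ℕ) < (j2 : ℕ)) \
      Finset.univ.filter (fun i : Fin n => (i : ℕ) < (j1 : ℕ)) =
      Finset.univ.filter (fun i : Fin n => (j1 : ℕ) ≤ (i : ℕ) ∧ (i : ℕ) < (j2 : ℕ)) := by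
    ext i; simp; omega
  have := Finset.sum_sdiff (f := x) hsub
  rw [hsd] at this
  have h2 : ∑ i ∈ Finset.univ.filter (fun i : Fin n => (j1 : ℕ) ≤ (i : ℕ) ∧ (i : ℕ) < (j2 : ℕ)), x i = 0 := by
    have : ∑ i ∈ Finset.univ.filter (fun i : Fin n => (j1:ℕ) ≤ (i:ℕ) ∧ (i:ℕ) < (j2:ℕ)), x i
        + s j1 = s j2 := this
    rw [hs12] at this
    exact add_right_cancel (by rw [this, zero_add])
  simpa using h2

lemma block (p e : ℕ) (hp : p.Prime) (he : 0 < e) {w : ℕ} (c : Fin w → ZMod (p ^ e))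
    (H : ∀ S : Finset (Fin w), S.Nonempty → ∀ b : Fin w → ZMod p,
      (∀ δ ∈ S, b δ ∈ Tset p) →
      ∑ δ ∈ S, b δ * ZMod.castHom (dvd_pow_self p he.ne') (ZMod p) (c δ) ≠ 0) :
    ¬ HasWZS (Tset (p ^ e))
      (fun kd : Fin e × Fin w => c kd.2 * (p : ZMod (p ^ e)) ^ (kd.1 : ℕ)) := by
  rintro ⟨I, hne, a, ha, hsum⟩
  set k0 : Fin e := (I.image Prod.fst).min' (hne.image _) with hk0
  have hk0m : k0 ∈ I.image Prod.fst := Finset.min'_mem _ _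
  have hmin : ∀ kd ∈ I, k0 ≤ kd.1 := fun kd h =>
    Finset.min'_le _ _ (Finset.mem_image_of_mem _ h)
  have hj : (k0 : ℕ) + 1 ≤ e := k0.isLt
  have hdvd : p ^ ((k0 : ℕ) + 1) ∣ p ^ e := pow_dvd_pow p hj
  haveI : NeZero (p ^ ((k0 : ℕ) + 1)) := ⟨pow_ne_zero _ hp.pos.ne'⟩
  set π : ZMod (p ^ e) →+* ZMod (p ^ ((k0 : ℕ) + 1)) :=
    ZMod.castHom hdvd _ with hπ
  have h0 : ∑ kd ∈ I, π (a kd) * (π (c kd.2) * (p : ZMod (p ^ ((k0:ℕ)+1))) ^ (kd.1 : ℕ)) = 0 := by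
    have := congrArg π hsum
    simpa [map_sum, map_mul, map_pow, map_natCast] using this
  have hpz : ∀ k : ℕ, (k0 : ℕ) + 1 ≤ k → (p : ZMod (p ^ ((k0:ℕ)+1))) ^ k = 0 := by
    intro k hk
    have h1 : (p : ZMod (p ^ ((k0:ℕ)+1))) ^ ((k0:ℕ)+1) = 0 := by
      rw [← Nat.cast_pow]; exact ZMod.natCast_self _
    calc (p : ZMod (p ^ ((k0:ℕ)+1))) ^ k
        = (p : ZMod (p ^ ((k0:ℕ)+1))) ^ ((k0:ℕ)+1) * p ^ (k - ((k0:ℕ)+1)) := by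
          rw [← pow_add]; congr 1; omega
      _ = 0 := by rw [h1, zero_mul]
  set I0 := I.filter (fun kd : Fin e × Fin w => kd.1 = k0) with hI0
  have hI0ne : I0.Nonempty := by
    obtain ⟨kd, hkd, hfst⟩ := Finset.mem_image.mp hk0m
    exact ⟨kd, Finset.mem_filter.mpr ⟨hkd, hfst⟩⟩
  set β : ZMod (p ^ ((k0:ℕ)+1)) := ∑ kd ∈ I0, π (a kd) * π (c kd.2) with hβ
  have hβ0 : β * (p : ZMod (p ^ ((k0:ℕ)+1))) ^ (k0 : ℕ) = 0 := by
    have hsplit := Finset.sum_filter_add_sum_filter_not I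
      (fun kd : Fin e × Fin w => kd.1 = k0)
      (fun kd => π (a kd) * (π (c kd.2) * (p : ZMod (p ^ ((k0:ℕ)+1))) ^ (kd.1 : ℕ)))
    rw [← hsplit] at h0
    have hz : ∑ kd ∈ I.filter (fun kd : Fin e × Fin w => ¬ kd.1 = k0),
        π (a kd) * (π (c kd.2) * (p : ZMod (p ^ ((k0:ℕ)+1))) ^ (kd.1 : ℕ)) = 0 := by
      refine Finset.sum_eq_zero fun kd hkd => ?_
      obtain ⟨hkdI, hkdne⟩ := Finset.mem_filter.mp hkd
      have hge : (k0 : ℕ) + 1 ≤ (kd.1 : ℕ) := by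
        have := hmin kd hkdI
        have hne' : kd.1 ≠ k0 := hkdne
        have : (k0 : ℕ) ≤ (kd.1 : ℕ) := this
        have : (k0 : ℕ) ≠ (kd.1 : ℕ) := fun hh => hne' (Fin.ext hh.symm)
        omega
      rw [hpz _ hge, mul_zero, mul_zero]
    rw [hz, add_zero] at h0
    rw [hβ, Finset.sum_mul, ← h0]
    refine Finset.sum_congr rfl fun kd hkd => ?_
    have : kd.1 = k0 := (Finset.mem_filter.mp hkd).2
    rw [this]; ring
  -- pass to ℕ to deduce p ∣ β.val
  have hdvnat : p ^ ((k0:ℕ)+1) ∣ β.val * p ^ (k0 : ℕ) := by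
    rw [← ZMod.natCast_eq_zero_iff]
    push_cast
    rw [ZMod.natCast_val, ZMod.cast_id]
    exact hβ0
  have hpβ : p ∣ β.val := by
    have h1 : p * p ^ (k0:ℕ) ∣ β.val * p ^ (k0:ℕ) := by
      rw [← pow_succ']; exact hdvnat
    exact (Nat.mul_dvd_mul_iff_right (pow_pos hp.pos (k0:ℕ))).mp h1
  -- project to ZMod p
  set π1 : ZMod (p ^ ((k0:ℕ)+1)) →+* ZMod p :=
    ZMod.castHom (dvd_pow_self p (Nat.succ_ne_zero _)) _ with hπ1
  have hβp : π1 β = 0 := by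
    have : π1 β = ((β.val : ℕ) : ZMod p) := by
      rw [ZMod.castHom_apply, ← ZMod.natCast_val]
    rw [this, ZMod.natCast_eq_zero_iff]
    exact hpβ
  -- now contradiction with H
  set S : Finset (Fin w) := I0.image Prod.snd with hS
  have hSne : S.Nonempty := hI0ne.image _
  have hcomp : ∀ z : ZMod (p ^ e),
      π1 (π z) = ZMod.castHom (dvd_pow_self p he.ne') (ZMod p) z := by
    intro z
    have := ZMod.castHom_comp (dvd_pow_self p (Nat.succ_ne_zero (k0:ℕ))) hdvd
    calc π1 (π z) = (π1.comp π) z := rfl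
      _ = _ := by rw [hπ1, hπ, this]
  have hmemI0 : ∀ kd ∈ I0, kd = (k0, kd.2) := by
    intro kd hkd
    have : kd.1 = k0 := (Finset.mem_filter.mp hkd).2
    exact Prod.ext this rfl
  have hinj : Set.InjOn Prod.snd (I0 : Set (Fin e × Fin w)) := by
    intro x hx y hy hxy
    have hx1 : x.1 = k0 := (Finset.mem_filter.mp hx).2
    have hy1 : y.1 = k0 := (Finset.mem_filter.mp hy).2
    exact Prod.ext (hx1.trans hy1.symm) hxy
  refine H S hSne (fun δ => π1 (π (a (k0, δ)))) ?_ ?_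
  · intro δ hδ
    obtain ⟨kd, hkd, rfl⟩ := Finset.mem_image.mp hδ
    have hkdI : kd ∈ I := (Finset.mem_filter.mp hkd).1
    have hkd' := hmemI0 kd hkd
    show π1 (π (a (k0, kd.2))) ∈ Tset p
    rw [← hkd']
    exact tset_map _ (tset_map _ (ha kd hkdI))
  · rw [← hβp, hβ, map_sum]
    rw [Finset.sum_image hinj]
    refine Finset.sum_congr rfl fun kd hkd => ?_
    have hkd' := hmemI0 kd hkd
    show π1 (π (a (k0, kd.2))) * ZMod.castHom (dvd_pow_self p he.ne') (ZMod p) (c kd.2)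
        = π1 (π (a kd) * π (c kd.2))
    rw [map_mul, hcomp, ← hkd', hcomp (a kd), hcomp (c kd.2)]

lemma exists_noncube (p : ℕ) (hp : p.Prime) (h1 : p % 3 = 1) :
    ∃ c : (ZMod p)ˣ, (c : ZMod p) ∉ Tset p := by
  haveI : Fact p.Prime := ⟨hp⟩
  have hcard : Fintype.card (ZMod p)ˣ = p - 1 := ZMod.card_units p
  have h3 : (3 : ℕ) ∣ Fintype.card (ZMod p)ˣ := by
    rw [hcard]
    have := hp.two_le
    omega
  obtain ⟨g, hg⟩ := exists_prime_orderOf_dvd_card 3 h3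
  have hg3 : g ^ 3 = 1 := by rw [← hg]; exact pow_orderOf_eq_one g
  have hgne : g ≠ 1 := by
    intro hh
    rw [hh, orderOf_one] at hg
    norm_num at hg
  have hninj : ¬ Function.Injective (fun u : (ZMod p)ˣ => u ^ 3) := by
    intro hinj
    exact hgne (hinj (show g ^ 3 = 1 ^ 3 by rw [hg3, one_pow]))
  have hnsurj : ¬ Function.Surjective (fun u : (ZMod p)ˣ => u ^ 3) := fun hs =>
    hninj (Finite.injective_iff_surjective.mpr hs)
  simp only [Function.Surjective, not_forall] at hnsurj
  obtain ⟨c, hc⟩ := hnsurj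
  push_neg at hc
  refine ⟨c, ?_⟩
  rintro ⟨u, hu⟩
  exact hc u (Units.ext hu)

lemma combo {p : ℕ} (hp : p.Prime) {cb a0 a1 : ZMod p} (hcb : cb ∉ Tset p)
    (h0 : a0 ∈ Tset p) (h1 : a1 ∈ Tset p) : a0 + a1 * cb ≠ 0 := by
  haveI : Fact p.Prime := ⟨hp⟩
  obtain ⟨u, hu⟩ := h0
  obtain ⟨v, hv⟩ := h1
  intro h
  apply hcb
  refine ⟨-(u * v⁻¹), ?_⟩
  have hv3 : ((v : ZMod p)) ^ 3 ≠ 0 := pow_ne_zero _ (Units.ne_zero v)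
  have hcb' : cb = -((u : ZMod p) ^ 3 * (((v : ZMod p)) ^ 3)⁻¹) := by
    rw [← hu, ← hv] at h
    field_simp
    linear_combination h
  rw [hcb']
  push_cast [Units.val_inv_eq_inv_val]
  rw [neg_pow, mul_pow, inv_pow]
  ring

lemma block_one (p e : ℕ) (hp : p.Prime) (he : 0 < e) :
    ∃ x : Fin e × Fin 1 → ZMod (p ^ e), ¬ HasWZS (Tset (p ^ e)) x := by
  refine ⟨_, block p e hp he (fun _ => (1 : ZMod (p ^ e))) ?_⟩
  intro S hS b hb
  have hS0 : S = {0} := by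
    obtain ⟨δ, hδ⟩ := hS
    exact Finset.eq_singleton_iff_unique_mem.mpr ⟨Fin.eq_zero δ ▸ hδ, fun x _ => Fin.eq_zero x⟩
  rw [hS0, Finset.sum_singleton, map_one, mul_one]
  exact tset_ne_zero hp (hb 0 (by rw [hS0]; exact Finset.mem_singleton_self 0))

lemma block_two (p e : ℕ) (hp : p.Prime) (he : 0 < e) (h1 : p % 3 = 1) :
    ∃ x : Fin e × Fin 2 → ZMod (p ^ e), ¬ HasWZS (Tset (p ^ e)) x := by
  haveI : Fact p.Prime := ⟨hp⟩
  obtain ⟨cu, hcu⟩ := exists_noncube p hp h1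
  set cb : ZMod p := (cu : ZMod p) with hcb
  set lift : ZMod (p ^ e) := ((cb.val : ℕ) : ZMod (p ^ e)) with hlift
  have hcast : ZMod.castHom (dvd_pow_self p he.ne') (ZMod p) lift = cb := by
    rw [hlift, map_natCast]
    exact ZMod.natCast_rightInverse cb
  refine ⟨_, block p e hp he ![1, lift] ?_⟩
  intro S hS b hb
  have hshape : ∀ T : Finset (Fin 2), T.Nonempty →
      T = {0} ∨ T = {1} ∨ T = {0, 1} := by decide
  have hc0 : ZMod.castHom (dvd_pow_self p he.ne') (ZMod p) (![1, lift] 0) = 1 := by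
    simp only [Matrix.cons_val_zero, map_one]
  have hc1 : ZMod.castHom (dvd_pow_self p he.ne') (ZMod p) (![1, lift] 1) = cb := by
    simp only [Matrix.cons_val_one, Matrix.head_cons]
    exact hcast
  rcases hshape S hS with h | h | h
  · rw [h, Finset.sum_singleton, hc0, mul_one]
    exact tset_ne_zero hp (hb 0 (by rw [h]; exact Finset.mem_singleton_self 0))
  · rw [h, Finset.sum_singleton, hc1]
    exact mul_ne_zero (tset_ne_zero hp (hb 1 (by rw [h]; exact Finset.mem_singleton_self 1)))
      (Units.ne_zero cu)
  · rw [h, Finset.sum_pair (by decide : (0 : Fin 2) ≠ 1), hc0, hc1, mul_one]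
    exact combo hp hcu (hb 0 (by rw [h]; decide)) (hb 1 (by rw [h]; decide))

lemma combine {u v : ℕ} (huv : Nat.Coprime u v) {ι κ : Type}
    {x : ι → ZMod u} {y : κ → ZMod v}
    (hx : ¬ HasWZS (Tset u) x) (hy : ¬ HasWZS (Tset v) y) :
    ¬ HasWZS (Tset (u * v))
      (Sum.elim (fun i => (ZMod.chineseRemainder huv).symm (x i, 0))
                (fun k => (ZMod.chineseRemainder huv).symm (0, y k))) := by
  rintro ⟨I, ⟨i0, hi0⟩, a, ha, hsum⟩
  set e := ZMod.chineseRemainder huv with he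
  set z : ι ⊕ κ → ZMod (u * v) :=
    Sum.elim (fun i => e.symm (x i, 0)) (fun k => e.symm (0, y k)) with hz
  cases i0 with
  | inl j0 =>
    apply hx
    set f : ZMod (u * v) →+* ZMod u := (RingHom.fst (ZMod u) (ZMod v)).comp e.toRingHom with hf
    have hfz1 : ∀ i : ι, f (z (Sum.inl i)) = x i := by
      intro i
      show (e (e.symm (x i, 0))).1 = x i
      rw [RingEquiv.apply_symm_apply]
    have hfz2 : ∀ k : κ, f (z (Sum.inr k)) = 0 := by
      intro k
      show (e (e.symm (0, y k))).1 = 0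
      rw [RingEquiv.apply_symm_apply]
    refine ⟨I.preimage Sum.inl Sum.inl_injective.injOn,
      ⟨j0, Finset.mem_preimage.mpr hi0⟩,
      fun j => f (a (Sum.inl j)),
      fun j hj => tset_map f (ha _ (Finset.mem_preimage.mp hj)), ?_⟩
    have hps := Finset.sum_preimage Sum.inl I Sum.inl_injective.injOn
      (fun i => f (a i) * f (z i)) ?_
    · have hIsum : ∑ i ∈ I, f (a i) * f (z i) = 0 := by
        have := congrArg f hsum
        simpa [map_sum, map_mul] using this
      rw [hIsum] at hps
      rw [← hps]
      refine Finset.sum_congr rfl fun j hj => ?_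
      rw [hfz1 j]
    · intro i hiI hir
      cases i with
      | inl j => exact absurd ⟨j, rfl⟩ hir
      | inr k =>
        show f (a (Sum.inr k)) * f (z (Sum.inr k)) = 0
        rw [hfz2 k, mul_zero]
  | inr k0 =>
    apply hy
    set f : ZMod (u * v) →+* ZMod v := (RingHom.snd (ZMod u) (ZMod v)).comp e.toRingHom with hf
    have hfz1 : ∀ k : κ, f (z (Sum.inr k)) = y k := by
      intro k
      show (e (e.symm (0, y k))).2 = y k
      rw [RingEquiv.apply_symm_apply]
    have hfz2 : ∀ i : ι, f (z (Sum.inl i)) = 0 := by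
      intro i
      show (e (e.symm (x i, 0))).2 = 0
      rw [RingEquiv.apply_symm_apply]
    refine ⟨I.preimage Sum.inr Sum.inr_injective.injOn,
      ⟨k0, Finset.mem_preimage.mpr hi0⟩,
      fun k => f (a (Sum.inr k)),
      fun k hk => tset_map f (ha _ (Finset.mem_preimage.mp hk)), ?_⟩
    have hps := Finset.sum_preimage Sum.inr I Sum.inr_injective.injOn
      (fun i => f (a i) * f (z i)) ?_
    · have hIsum : ∑ i ∈ I, f (a i) * f (z i) = 0 := by
        have := congrArg f hsum
        simpa [map_sum, map_mul] using this
      rw [hIsum] at hps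
      rw [← hps]
      refine Finset.sum_congr rfl fun k hk => ?_
      rw [hfz1 k]
    · intro i hiI hir
      cases i with
      | inl j =>
        show f (a (Sum.inl j)) * f (z (Sum.inl j)) = 0
        rw [hfz2 j, mul_zero]
      | inr k => exact absurd ⟨k, rfl⟩ hir

def wgt (p : ℕ) : ℕ := if p % 3 = 1 then 2 else 1

def Lw (n : ℕ) : ℕ := (n.primeFactorsList.map wgt).sum

lemma Lw_mul {a b : ℕ} (ha : a ≠ 0) (hb : b ≠ 0) : Lw (a * b) = Lw a + Lw b := by
  unfold Lw
  rw [← List.sum_append, ← List.map_append]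
  exact List.Perm.sum_eq (List.Perm.map wgt (Nat.perm_primeFactorsList_mul ha hb))

lemma Lw_pow {p : ℕ} (hp : p.Prime) (e : ℕ) : Lw (p ^ e) = wgt p * e := by
  unfold Lw
  rw [hp.primeFactorsList_pow, List.map_replicate, List.sum_replicate, smul_eq_mul, mul_comm]

lemma main_lemma : ∀ n : ℕ, 0 < n → ∃ x : Fin (Lw n) → ZMod n, ¬ HasWZS (Tset n) x := by
  intro n
  induction n using Nat.strong_induction_on with
  | _ n IH =>
  intro hn
  by_cases hone : n = 1
  · subst hone
    have hL : Lw 1 = 0 := by simp [Lw]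
    refine ⟨fun _ => 0, ?_⟩
    rintro ⟨I, ⟨i, hi⟩, -⟩
    have := i.isLt
    omega
  · set p := n.minFac with hpd
    have hp : p.Prime := Nat.minFac_prime hone
    set ee := n.factorization p with hee
    have hdvdp : p ∣ n := Nat.minFac_dvd n
    have hepos : 0 < ee := hp.factorization_pos_of_dvd hn.ne' hdvdp
    set m := n / p ^ ee with hm
    have hnm : p ^ ee * m = n := Nat.ordProj_mul_ordCompl_eq_self n p
    have hpm : ¬ p ∣ m := Nat.not_dvd_ordCompl hp hn.ne'
    have hmpos : 0 < m := Nat.ordCompl_pos p hn.ne'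
    have hpe1 : 1 < p ^ ee := Nat.one_lt_pow hepos.ne' hp.one_lt
    have hmlt : m < n := by
      rw [← hnm]
      calc m = 1 * m := (one_mul m).symm
        _ < p ^ ee * m := (Nat.mul_lt_mul_right hmpos).mpr hpe1
    have hcop : Nat.Coprime (p ^ ee) m :=
      Nat.Coprime.pow_left _ ((Nat.Prime.coprime_iff_not_dvd hp).mpr hpm)
    obtain ⟨y, hy⟩ := IH m hmlt hmpos
    obtain ⟨xb, hxb⟩ : ∃ x : Fin ee × Fin (wgt p) → ZMod (p ^ ee),
        ¬ HasWZS (Tset (p ^ ee)) x := by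
      by_cases h3 : p % 3 = 1
      · rw [show wgt p = 2 by simp [wgt, h3]]
        exact block_two p ee hp hepos h3
      · rw [show wgt p = 1 by simp [wgt, h3]]
        exact block_one p ee hp hepos
    have hcomb := combine hcop hxb hy
    rw [← hnm]
    have hLcard : Fintype.card ((Fin ee × Fin (wgt p)) ⊕ Fin (Lw m)) = Lw (p ^ ee * m) := by
      rw [Lw_mul (by positivity) hmpos.ne', Lw_pow hp]
      simp [Fintype.card_sum, Fintype.card_prod, mul_comm]
    set E := Fintype.equivFinOfCardEq hLcard with hE
    refine ⟨_ ∘ E.symm, fun hW => hcomb (hasWZS_of_comp E.symm E.symm.injective hW)⟩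


theorem stmt5 (n n1 n2 : ℕ) (h : n = n1 * n2) (hodd : Odd n)
    (h1 : ∀ p : ℕ, p.Prime → p ∣ n1 → p % 3 = 1)
    (h2 : ∀ q : ℕ, q.Prime → q ∣ n2 → q % 3 = 2) :
    2 * Omega n1 + Omega n2 + 1 ≤ DavA n (Tset n) := by
  have hn0 : n ≠ 0 := by
    rintro rfl
    rw [Nat.odd_iff] at hodd
    omega
  have hn1 : n1 ≠ 0 := by rintro rfl; simp at h; exact hn0 h
  have hn2 : n2 ≠ 0 := by rintro rfl; simp at h; exact hn0 h
  have hnpos : 0 < n := Nat.pos_of_ne_zero hn0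
  obtain ⟨x, hx⟩ := main_lemma n hnpos
  have hLn : Lw n = 2 * Omega n1 + Omega n2 := by
    rw [h, Lw_mul hn1 hn2]
    congr 1
    · have hw : ∀ q ∈ n1.primeFactorsList, wgt q = 2 := fun q hq => by
        simp [wgt, h1 q (Nat.prime_of_mem_primeFactorsList hq)
          (Nat.dvd_of_mem_primeFactorsList hq)]
      unfold Lw Omega
      rw [List.map_congr_left hw]
      rw [List.map_const', List.sum_replicate, smul_eq_mul, mul_comm]
    · have hw : ∀ q ∈ n2.primeFactorsList, wgt q = 1 := fun q hq => by
        have := h2 q (Nat.prime_of_mem_primeFactorsList hq)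
          (Nat.dvd_of_mem_primeFactorsList hq)
        simp [wgt]
        omega
      unfold Lw Omega
      rw [List.map_congr_left hw]
      rw [List.map_const', List.sum_replicate, smul_eq_mul, mul_one]
  rw [← hLn]
  unfold DavA
  refine le_csInf ⟨n, hnpos, fun x' => exists_wzs n hnpos x'⟩ ?_
  rintro ℓ ⟨hℓpos, hℓ⟩
  by_contra hcon
  push_neg at hcon
  have hle : ℓ ≤ Lw n := by omega
  exact hx (hasWZS_of_comp (Fin.castLE hle) (Fin.castLE_injective hle) (hℓ (x ∘ Fin.castLE hle)))
end

section
/- Let n = n_1 n_2 be a squarefree odd integer not divisible by 7 or 13, where n_1 = ∏_{i=1}^r p_i with primes p_i ≡ 1 (mod 3) and n_2 = ∏_{j=1}^s q_j with primes q_j ≡ 2 (mod 3). Let m ≥ 3ω(n_1) + 2ω(n_2) and let S = x_1,…,x_{m + 2Ω(n_1) + Ω(n_2)} be a sequence over Z/nZ. Then there exist a subsequence x_{i_1},…,x_{i_m} of S of length m and weights a_1,…,a_m ∈ T_n such that a_1 x_{i_1} + … + a_m x_{i_m} ≡ 0 (mod n). -/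
open Finset

open scoped Classical

/-!
Modulo a prime `q ≡ 2 (mod 3)` every unit is a cube, so two nonzero terms already admit a
`T_q`-weighted zero sum. Modulo a prime `p ≡ 1 (mod 3)` with `p > 16`, expanding the indicator
of the cubes through a cubic character `χ` turns the number of solutions of `c a + d b = t` in
cubes into a combination of Jacobi sums dominated by `J(1, 1) = p - 2`, so three nonzero terms
suffice. It remains to discard `2 Ω(n₁) + Ω(n₂)` terms so that modulo each prime the survivors
are all zero or contain at least three (resp. two) nonzero ones, and to glue the local weights
by the Chinese remainder theorem, under which `T_n` is the product of the `T_p`.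
-/

lemma MonoidHom.ker_eq_range_powMonoidHom {G H : Type*} [CommGroup G] [IsCyclic G] [Finite G]
    [Group H] {ℓ : ℕ} (hℓ : ℓ.Prime) (hdvd : ℓ ∣ Nat.card G) (ψ : G →* H)
    (hψ : ∀ g, ψ g ^ ℓ = 1) (hψ1 : ψ ≠ 1) : ψ.ker = (powMonoidHom ℓ : G →* G).range := by
  have hle : (powMonoidHom ℓ : G →* G).range ≤ ψ.ker := by
    rintro _ ⟨g, rfl⟩
    simp [MonoidHom.mem_ker, hψ]
  have hidx : (powMonoidHom ℓ : G →* G).range.index = ℓ := by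
    rw [IsCyclic.index_powMonoidHom_range, Nat.gcd_eq_right hdvd]
  refine (hle.lt_or_eq.resolve_left fun hlt => ?_).symm
  have hidx_lt := Subgroup.index_strictAnti hlt
  rcases (Nat.dvd_prime hℓ).1 (hidx ▸ Subgroup.index_dvd_of_le hle) with h | h
  · exact hψ1 (MonoidHom.ker_eq_top_iff.mp (Subgroup.index_eq_one.mp h))
  · omega

lemma MulChar.sum_range_pow_apply {R R' : Type*} [CommMonoid R] [CommRing R'] [IsDomain R']
    {χ : MulChar R R'} {n : ℕ} (hχ : χ ^ n = 1) (x : R) :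
    ∑ j ∈ range n, (χ ^ j) x = if χ x = 1 then (n : R') else 0 := by
  by_cases hx : IsUnit x
  · obtain ⟨u, rfl⟩ := hx
    simp_rw [MulChar.pow_apply_coe]
    split_ifs with h
    · simp [h]
    · have := geom_sum_mul (χ u) n
      rw [← MulChar.pow_apply_coe, hχ, MulChar.one_apply_coe, sub_self] at this
      exact (mul_eq_zero.mp this).resolve_right (sub_ne_zero.mpr h)
  · simp [MulChar.map_nonunit _ hx]

section JacobiSum

variable {F : Type*} [Field F] [Fintype F]

lemma sum_mulChar_mul_mulChar_sub {R : Type*} [CommRing R] (χ ψ : MulChar F R) {t : F}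
    (ht : t ≠ 0) : ∑ y, χ y * ψ (t - y) = χ t * ψ t * jacobiSum χ ψ := by
  rw [jacobiSum, Finset.mul_sum, ← Equiv.sum_comp (Equiv.mulLeft₀ t ht)]
  refine Finset.sum_congr rfl fun w _ => ?_
  rw [Equiv.mulLeft₀_apply, show t - t * w = t * (1 - w) by ring, map_mul, map_mul]
  ring

lemma jacobiSum_inv_inv_eq_conj (χ ψ : MulChar F ℂ) :
    jacobiSum χ⁻¹ ψ⁻¹ = starRingEnd ℂ (jacobiSum χ ψ) := by
  rw [← MulChar.star_eq_inv, ← MulChar.star_eq_inv]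
  exact jacobiSum_ringHomComp χ ψ (starRingEnd ℂ)

lemma norm_jacobiSum_eq_sqrt_card {χ ψ : MulChar F ℂ} (hχ : χ ≠ 1) (hψ : ψ ≠ 1)
    (hχψ : χ * ψ ≠ 1) : ‖jacobiSum χ ψ‖ = √(Fintype.card F) := by
  have hchar : ringChar ℂ ≠ ringChar F := by
    simpa only [ringChar.eq_zero] using (CharP.ringChar_ne_zero_of_finite F).symm
  have h := jacobiSum_mul_jacobiSum_inv hchar hχ hψ hχψ
  rw [jacobiSum_inv_inv_eq_conj, Complex.mul_conj, ← Complex.sq_norm] at h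
  rw [← Real.sqrt_sq (norm_nonneg _), show ‖jacobiSum χ ψ‖ ^ 2 = Fintype.card F by exact_mod_cast h]

lemma norm_jacobiSum_inv {χ : MulChar F ℂ} (hχ : χ ≠ 1) : ‖jacobiSum χ χ⁻¹‖ = 1 := by
  rw [jacobiSum_nontrivial_inv hχ, norm_neg]
  refine Complex.norm_eq_one_of_pow_eq_one (n := 2) ?_ two_ne_zero
  rw [← map_pow, neg_one_sq, map_one]

lemma sum_mul_sum_pow_apply_eq_sum_jacobiSum {R : Type*} [CommRing R]
    (χ : MulChar F R) (n : ℕ) (c d : F) {t : F} (ht : t ≠ 0) :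
    ∑ y, (∑ j ∈ range n, (χ ^ j) (c * y)) * ∑ k ∈ range n, (χ ^ k) (d * (t - y)) =
      ∑ j ∈ range n, ∑ k ∈ range n,
        (χ ^ j) (c * t) * (χ ^ k) (d * t) * jacobiSum (χ ^ j) (χ ^ k) := by
  simp only [Finset.sum_mul_sum, map_mul]
  rw [Finset.sum_comm]
  refine Finset.sum_congr rfl fun j _ => ?_
  rw [Finset.sum_comm]
  refine Finset.sum_congr rfl fun k _ => ?_
  calc ∑ y, (χ ^ j) c * (χ ^ j) y * ((χ ^ k) d * (χ ^ k) (t - y))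
      = (χ ^ j) c * (χ ^ k) d * ∑ y, (χ ^ j) y * (χ ^ k) (t - y) := by
        rw [Finset.mul_sum]
        exact Finset.sum_congr rfl fun _ _ => by ring
    _ = _ := by rw [sum_mulChar_mul_mulChar_sub _ _ ht]; ring

end JacobiSum

lemma neg_one_mem_Tset (n : ℕ) : (-1 : ZMod n) ∈ Tset n := ⟨-1, by norm_num⟩

lemma mem_Tset_of_mod_three_eq_two {q : ℕ} [Fact q.Prime] (hq : q % 3 = 2) {x : ZMod q}
    (hx : x ≠ 0) : x ∈ Tset q := by
  have hcop : (Nat.card (ZMod q)ˣ).Coprime 3 := by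
    rw [Nat.card_eq_fintype_card, ZMod.card_units_eq_totient, Nat.totient_prime Fact.out,
      Nat.coprime_comm, Nat.Prime.coprime_iff_not_dvd Nat.prime_three]
    omega
  obtain ⟨u, hu⟩ := hcop.pow_left_bijective.surjective (Units.mk0 x hx)
  exact ⟨u, by rw [← Units.val_pow_eq_pow_val, show u ^ 3 = _ from hu, Units.val_mk0]⟩

lemma mem_Tset_chineseRemainder_symm {a b : ℕ} (hab : a.Coprime b) {s : ZMod a} {t : ZMod b}
    (hs : s ∈ Tset a) (ht : t ∈ Tset b) :
    (ZMod.chineseRemainder hab).symm (s, t) ∈ Tset (a * b) := by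
  obtain ⟨u, rfl⟩ := hs
  obtain ⟨v, rfl⟩ := ht
  have hunit : IsUnit ((ZMod.chineseRemainder hab).symm ((u : ZMod a), (v : ZMod b))) :=
    (Prod.isUnit_iff.mpr ⟨u.isUnit, v.isUnit⟩).map _
  exact ⟨hunit.unit, by rw [IsUnit.unit_spec, ← map_pow, Prod.pow_mk]⟩

section CubicCharacter

variable {p : ℕ} [Fact p.Prime] {χ : MulChar (ZMod p) ℂ}

lemma exists_mulChar_orderOf_eq_three (hp : p % 3 = 1) :
    ∃ χ : MulChar (ZMod p) ℂ, orderOf χ = 3 :=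
  MulChar.exists_mulChar_orderOf (ZMod p) (by rw [ZMod.card]; omega)
    (Complex.isPrimitiveRoot_exp 3 (by norm_num))

lemma mulChar_apply_eq_one_iff_mem_Tset (hχ : orderOf χ = 3) (x : ZMod p) :
    χ x = 1 ↔ x ∈ Tset p := by
  have hχ3 : χ ^ 3 = 1 := hχ ▸ pow_orderOf_eq_one χ
  by_cases hx : IsUnit x
  · obtain ⟨u, rfl⟩ := hx
    have h3 : 3 ∣ Nat.card (ZMod p)ˣ := by
      have := χ.orderOf_dvd_card_sub_one
      rwa [hχ, ZMod.card, ← ZMod.card_units p, ← Nat.card_eq_fintype_card] at this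
    have hψ1 : χ.toUnitHom ≠ 1 := fun h => by
      have : χ = 1 := MulChar.eq_one_iff.mpr fun a => by
        simpa [MulChar.coe_toUnitHom] using congrArg Units.val (DFunLike.congr_fun h a)
      simp [this] at hχ
    have hker := χ.toUnitHom.ker_eq_range_powMonoidHom Nat.prime_three h3
      (fun g => Units.ext <| by simp [← MulChar.pow_apply_coe, hχ3]) hψ1
    have := SetLike.ext_iff.mp hker u
    simp only [MonoidHom.mem_ker, MonoidHom.mem_range, powMonoidHom_apply] at this
    rw [← MulChar.coe_toUnitHom, Units.val_eq_one, this]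
    simp [Tset, ← Units.val_pow_eq_pow_val, Units.ext_iff]
  · rw [MulChar.map_nonunit χ hx]
    simp only [zero_ne_one, false_iff]
    rintro ⟨v, rfl⟩
    exact hx (v.isUnit.pow 3)

lemma norm_jacobiSum_pow_le (hχ : orderOf χ = 3) {j k : ℕ} (hj : j < 3) (hk : k < 3)
    (h0 : j ≠ 0 ∨ k ≠ 0) : ‖jacobiSum (χ ^ j) (χ ^ k)‖ ≤ if j = k then √p else 1 := by
  have hne : ∀ i, ¬ 3 ∣ i → χ ^ i ≠ 1 := fun i hi => by
    rwa [Ne, ← orderOf_dvd_iff_pow_eq_one, hχ]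
  have hone : ∀ i, ¬ 3 ∣ i → ‖jacobiSum 1 (χ ^ i)‖ = 1 := fun i hi => by
    rw [jacobiSum_one_nontrivial (hne i hi), norm_neg, norm_one]
  have hsqrt : ∀ i, ¬ 3 ∣ 2 * i → ‖jacobiSum (χ ^ i) (χ ^ i)‖ = √p := fun i hi => by
    rw [norm_jacobiSum_eq_sqrt_card (hne i (by omega)) (hne i (by omega))
      (by rw [← pow_add, ← two_mul]; exact hne _ hi), ZMod.card]
  have hinv : ‖jacobiSum χ (χ ^ 2)‖ = 1 := by
    have hχ3 : χ ^ 3 = 1 := hχ ▸ pow_orderOf_eq_one χ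
    rw [show χ ^ 2 = χ⁻¹ from eq_inv_of_mul_eq_one_left (by rw [← pow_succ]; exact hχ3),
      norm_jacobiSum_inv (by simpa using hne 1 (by omega))]
  interval_cases j <;> interval_cases k
  · simp at h0
  all_goals
    first
      | rw [pow_zero, hone _ (by omega)]
      | rw [jacobiSum_comm, pow_zero, hone _ (by omega)]
      | rw [hsqrt _ (by omega)]
      | rw [pow_one, hinv]
      | rw [jacobiSum_comm, pow_one, hinv]
    simp

lemma sum_pow_mul_jacobiSum_ne_zero (hχ : orderOf χ = 3) (hp : 16 < p) {u v : ZMod p}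
    (hu : u ≠ 0) (hv : v ≠ 0) :
    ∑ j ∈ range 3, ∑ k ∈ range 3, (χ ^ j) u * (χ ^ k) v * jacobiSum (χ ^ j) (χ ^ k) ≠ 0 := by
  -- Besides `J(1, 1) = p - 2`, only `J(χ, χ)` and `J(χ², χ²)` exceed `1` in absolute value.
  set g : ℕ × ℕ → ℂ := fun jk =>
    (χ ^ jk.1) u * (χ ^ jk.2) v * jacobiSum (χ ^ jk.1) (χ ^ jk.2)
  have h00 : g (0, 0) = p - 2 := by
    simp [g, MulChar.one_apply (isUnit_iff_ne_zero.mpr hu),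
      MulChar.one_apply (isUnit_iff_ne_zero.mpr hv), jacobiSum_one_one]
  have hrest : ‖∑ jk ∈ (range 3 ×ˢ range 3).erase (0, 0), g jk‖ ≤ 2 * √p + 6 := calc
    _ ≤ ∑ jk ∈ (range 3 ×ˢ range 3).erase (0, 0), ‖g jk‖ := norm_sum_le _ _
    _ ≤ ∑ jk ∈ (range 3 ×ˢ range 3).erase (0, 0), if jk.1 = jk.2 then √p else 1 := by
      refine Finset.sum_le_sum fun jk hjk => ?_
      obtain ⟨hne, hj, hk⟩ : jk ≠ (0, 0) ∧ jk.1 < 3 ∧ jk.2 < 3 := by simpa using hjk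
      have := norm_jacobiSum_pow_le hχ hj hk (by contrapose! hne; exact Prod.ext hne.1 hne.2)
      simp only [g, norm_mul]
      refine le_trans (mul_le_of_le_one_left (norm_nonneg _) ?_) this
      exact mul_le_one₀ (DirichletCharacter.norm_le_one _ u) (norm_nonneg _)
        (DirichletCharacter.norm_le_one _ v)
    _ = 2 * √p + 6 := by
      rw [Finset.sum_erase_eq_sub (by simp)]
      simp only [Finset.sum_product, Finset.sum_range_succ, Finset.range_one,
        Finset.sum_singleton, ↓reduceIte, zero_ne_one, OfNat.zero_ne_ofNat, one_ne_zero,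
        OfNat.one_ne_ofNat, OfNat.ofNat_ne_zero, OfNat.ofNat_ne_one]
      ring
  rw [← Finset.sum_product']
  change ∑ jk ∈ range 3 ×ˢ range 3, g jk ≠ 0
  rw [← Finset.add_sum_erase _ _ (by simp : (0, 0) ∈ range 3 ×ˢ range 3), h00]
  intro h
  have hp' : (16 : ℝ) < p := by exact_mod_cast hp
  have hnorm : ‖((p : ℂ) - 2)‖ = p - 2 := by
    rw [show ((p : ℂ) - 2) = ((p - 2 : ℝ) : ℂ) by push_cast; ring, Complex.norm_real,
      Real.norm_of_nonneg (by linarith)]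
  have := Real.sq_sqrt (Nat.cast_nonneg p : (0 : ℝ) ≤ p)
  rw [eq_neg_of_add_eq_zero_left h, norm_neg] at hnorm
  nlinarith [Real.sqrt_nonneg p]

theorem exists_mem_Tset_mul_add_mul_eq (hp3 : p % 3 = 1) (hp : 16 < p)
    {c d t : ZMod p} (hc : c ≠ 0) (hd : d ≠ 0) (ht : t ≠ 0) :
    ∃ a ∈ Tset p, ∃ b ∈ Tset p, c * a + d * b = t := by
  obtain ⟨χ, hχ⟩ := exists_mulChar_orderOf_eq_three hp3
  have hind : ∀ x, ∑ j ∈ range 3, (χ ^ j) x = if x ∈ Tset p then 3 else 0 := fun x => by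
    rw [MulChar.sum_range_pow_apply (hχ ▸ pow_orderOf_eq_one χ),
      mulChar_apply_eq_one_iff_mem_Tset hχ, Nat.cast_ofNat]
  obtain ⟨y, -, hy⟩ := Finset.exists_ne_zero_of_sum_ne_zero <|
    (sum_mul_sum_pow_apply_eq_sum_jacobiSum χ 3 c⁻¹ d⁻¹ ht).trans_ne <|
      sum_pow_mul_jacobiSum_ne_zero hχ hp (mul_ne_zero (inv_ne_zero hc) ht)
        (mul_ne_zero (inv_ne_zero hd) ht)
  rw [hind, hind] at hy
  refine ⟨c⁻¹ * y, ?_, d⁻¹ * (t - y), ?_, by field_simp; ring⟩ <;> by_contra h <;> simp [h] at hy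

end CubicCharacter

lemma exists_weighted_sum_eq_zero_of_cover {F ι : Type*} [CommRing F] [NoZeroDivisors F]
    {A : Set F} (h1 : 1 ∈ A) {γ : F} (hγ : γ ∈ A) (hγ1 : γ ≠ 1) {I J : Finset ι} {k : ι}
    (y : ι → F) (hJI : J ⊆ I) (hkI : k ∈ I) (hkJ : k ∉ J) (hyk : y k ≠ 0)
    (hcover : ∀ t ≠ 0, ∃ b : ι → F, (∀ i ∈ J, b i ∈ A) ∧ ∑ i ∈ J, b i * y i = t) :
    ∃ a : ι → F, (∀ i ∈ I, a i ∈ A) ∧ ∑ i ∈ I, a i * y i = 0 := by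
  set r := ∑ i ∈ (I \ J).erase k, y i
  obtain ⟨w, hwA, hw⟩ : ∃ w ∈ A, r + w * y k ≠ 0 := by
    by_contra! h
    have : (γ - 1) * y k = 0 := by linear_combination h γ hγ - h 1 h1
    exact hγ1 (sub_eq_zero.mp ((mul_eq_zero.mp this).resolve_right hyk))
  obtain ⟨b, hbA, hb⟩ := hcover _ (neg_ne_zero.mpr hw)
  set a : ι → F := fun i => if i ∈ J then b i else if i = k then w else 1
  refine ⟨a, fun i _ => by simp only [a]; split_ifs <;> simp_all, ?_⟩
  have hJ : ∑ i ∈ J, a i * y i = -(r + w * y k) :=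
    hb ▸ Finset.sum_congr rfl fun i hi => by simp [a, hi]
  have hrest : ∑ i ∈ (I \ J).erase k, a i * y i = r :=
    Finset.sum_congr rfl fun i hi => by
      obtain ⟨hik, hi⟩ := Finset.mem_erase.mp hi
      simp [a, (Finset.mem_sdiff.mp hi).2, hik]
  rw [← Finset.sum_sdiff hJI, ← Finset.add_sum_erase _ _ (Finset.mem_sdiff.mpr ⟨hkI, hkJ⟩),
    hrest, hJ]
  simp only [a, if_neg hkJ, ↓reduceIte]
  ring

variable {ι : Type*}

theorem exists_Tset_weighted_sum_eq_zero_of_mod_three_eq_one {p : ℕ} [Fact p.Prime]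
    (hp3 : p % 3 = 1) (hp : 16 < p) {I : Finset ι} (y : ι → ZMod p)
    (hy : 2 < #(I.filter fun i => y i ≠ 0)) :
    ∃ a : ι → ZMod p, (∀ i ∈ I, a i ∈ Tset p) ∧ ∑ i ∈ I, a i * y i = 0 := by
  obtain ⟨i, hi, j, hj, k, hk, hij, hik, hjk⟩ := Finset.two_lt_card.mp hy
  simp only [Finset.mem_filter] at hi hj hk
  have : Fact (2 < p) := ⟨by omega⟩
  refine exists_weighted_sum_eq_zero_of_cover (one_mem_Tset p) (neg_one_mem_Tset p)
    ZMod.neg_one_ne_one y (J := {i, j}) (by simp [Finset.insert_subset_iff, hi.1, hj.1]) hk.1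
    (by simp [hik.symm, hjk.symm]) hk.2 fun t ht => ?_
  obtain ⟨a, ha, b, hb, hab⟩ := exists_mem_Tset_mul_add_mul_eq hp3 hp hi.2 hj.2 ht
  refine ⟨fun l => if l = i then a else b, by simp [ha, hb, hij.symm], ?_⟩
  rw [Finset.sum_pair hij]
  simp [hij.symm, ← hab, mul_comm]

theorem exists_Tset_weighted_sum_eq_zero_of_mod_three_eq_two {q : ℕ} [Fact q.Prime]
    (hq3 : q % 3 = 2) (hq2 : q ≠ 2) {I : Finset ι} (y : ι → ZMod q)
    (hy : 1 < #(I.filter fun i => y i ≠ 0)) :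
    ∃ a : ι → ZMod q, (∀ i ∈ I, a i ∈ Tset q) ∧ ∑ i ∈ I, a i * y i = 0 := by
  obtain ⟨i, hi, k, hk, hik⟩ := Finset.one_lt_card.mp hy
  simp only [Finset.mem_filter] at hi hk
  have : Fact (2 < q) := ⟨by have := (Fact.out : q.Prime).two_le; omega⟩
  refine exists_weighted_sum_eq_zero_of_cover (one_mem_Tset q) (neg_one_mem_Tset q)
    ZMod.neg_one_ne_one y (J := {i}) (by simp [hi.1]) hk.1 (by simp [Ne.symm hik]) hk.2
    fun t ht => ⟨fun _ => t / y i, by simp [mem_Tset_of_mod_three_eq_two hq3, ht, hi.2],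
      by simp [div_mul_cancel₀ _ hi.2]⟩

/-- The sequence is given by natural-number lifts, so that its reductions modulo all divisors
of `n` are plain casts. -/
def HasCubeZeroSum (k : ℕ) (I : Finset ι) (y : ι → ℕ) : Prop :=
  ∃ a : ι → ZMod k, (∀ i ∈ I, a i ∈ Tset k) ∧ ∑ i ∈ I, a i * y i = 0

namespace HasCubeZeroSum

variable {I : Finset ι} {y : ι → ℕ}

lemma one : HasCubeZeroSum 1 I y :=
  ⟨1, fun _ _ => ⟨1, Subsingleton.elim _ _⟩, Subsingleton.elim _ _⟩

lemma of_forall_natCast_eq_zero {k : ℕ} (hy : ∀ i ∈ I, (y i : ZMod k) = 0) :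
    HasCubeZeroSum k I y :=
  ⟨1, fun _ _ => one_mem_Tset k, Finset.sum_eq_zero fun i hi => by simp [hy i hi]⟩

lemma mul {a b : ℕ} (hab : a.Coprime b) (ha : HasCubeZeroSum a I y)
    (hb : HasCubeZeroSum b I y) : HasCubeZeroSum (a * b) I y := by
  obtain ⟨u, hu, hus⟩ := ha
  obtain ⟨v, hv, hvs⟩ := hb
  refine ⟨fun i => (ZMod.chineseRemainder hab).symm (u i, v i),
    fun i hi => mem_Tset_chineseRemainder_symm hab (hu i hi) (hv i hi),
    (ZMod.chineseRemainder hab).injective ?_⟩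
  simp [map_sum, Prod.ext_iff, Prod.fst_sum, Prod.snd_sum, hus, hvs]

lemma prod_primes {s : Finset ℕ} (hs : ∀ p ∈ s, p.Prime) (h : ∀ p ∈ s, HasCubeZeroSum p I y) :
    HasCubeZeroSum (∏ p ∈ s, p) I y := by
  induction s using Finset.induction_on with
  | empty => exact one
  | insert q s hq ih =>
    rw [Finset.prod_insert hq]
    simp only [Finset.forall_mem_insert] at hs h
    refine mul (Nat.Coprime.prod_right fun p hp => ?_) h.1 (ih hs.2 h.2)
    exact (Nat.coprime_primes hs.1 (hs.2 p hp)).mpr (ne_of_mem_of_not_mem hp hq).symm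

lemma of_prime [Fintype ι] [DecidableEq ι] {p : ℕ} (hp : p.Prime) (hp2 : p ≠ 2) (hp7 : p ≠ 7)
    (hp13 : p ≠ 13) (hp3 : p % 3 = 1 ∨ p % 3 = 2) {D : Finset ι}
    (hD : univ.filter (fun i => (y i : ZMod p) ≠ 0) ⊆ D ∨
      (if p % 3 = 1 then 2 else 1) < #(univ.filter (fun i => (y i : ZMod p) ≠ 0) \ D)) :
    HasCubeZeroSum p Dᶜ y := by
  have := Fact.mk hp
  have hsupp : univ.filter (fun i => (y i : ZMod p) ≠ 0) \ D =
      Dᶜ.filter fun i => (y i : ZMod p) ≠ 0 := by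
    ext
    simp [and_comm]
  rcases hD with hD | hD
  · exact of_forall_natCast_eq_zero fun i hi =>
      by_contra fun hne => Finset.mem_compl.mp hi (hD (by simpa using hne))
  rw [hsupp] at hD
  rcases hp3 with h3 | h3
  · rw [if_pos h3] at hD
    have : 16 < p := by
      by_contra!
      interval_cases p <;> first | omega | norm_num at hp
    exact exists_Tset_weighted_sum_eq_zero_of_mod_three_eq_one h3 this _ hD
  · rw [if_neg (by omega)] at hD
    exact exists_Tset_weighted_sum_eq_zero_of_mod_three_eq_two h3 hp2 _ hD

end HasCubeZeroSum

section Discarding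

variable {α κ : Type*} [DecidableEq α] (U : κ → Finset α) (e : κ → ℕ) (P : Finset κ)

lemma exists_card_le_forall_subset_or_lt_card_sdiff :
    ∃ D : Finset α, #D ≤ ∑ p ∈ P, e p ∧ ∀ p ∈ P, U p ⊆ D ∨ e p < #(U p \ D) := by
  -- Discard the supports of a maximal `K ⊆ P` that fits in its budget; maximality means
  -- every `p ∉ K` keeps more than `e p` survivors.
  obtain ⟨K, hK, hmax⟩ := Finset.exists_max_image
    (P.powerset.filter fun K => #(K.biUnion U) ≤ ∑ p ∈ K, e p) Finset.card ⟨∅, by simp⟩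
  simp only [Finset.mem_filter, Finset.mem_powerset] at hK hmax
  refine ⟨K.biUnion U, hK.2.trans (Finset.sum_le_sum_of_subset hK.1), fun p hp => ?_⟩
  by_cases hpK : p ∈ K
  · exact Or.inl (Finset.subset_biUnion_of_mem U hpK)
  refine Or.inr (not_le.mp fun hle => ?_)
  have := hmax (insert p K) ⟨Finset.insert_subset hp hK.1, ?_⟩
  · rw [Finset.card_insert_of_notMem hpK] at this
    omega
  rw [Finset.biUnion_insert, Finset.sum_insert hpK, ← Finset.card_sdiff_add_card]
  exact add_le_add hle hK.2

lemma exists_card_eq_of_card_le [Fintype α] {d : ℕ} {D₀ : Finset α} (hD₀ : #D₀ ≤ d)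
    (hcard : d + ∑ p ∈ P, (e p + 1) ≤ Fintype.card α)
    (h : ∀ p ∈ P, U p ⊆ D₀ ∨ e p < #(U p \ D₀)) :
    ∃ D : Finset α, #D = d ∧ ∀ p ∈ P, U p ⊆ D ∨ e p < #(U p \ D) := by
  choose W hWsub hWcard using fun p =>
    Finset.exists_subset_card_eq (min_le_right (e p + 1) #(U p \ D₀))
  obtain ⟨E, hEC, hEcard⟩ : ∃ E ⊆ (D₀ ∪ P.biUnion W)ᶜ, #E = d - #D₀ := by
    refine Finset.exists_subset_card_eq ?_
    have := Finset.card_union_le D₀ (P.biUnion W)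
    have := Finset.card_biUnion_le (s := P) (t := W)
    have : ∑ p ∈ P, #(W p) ≤ ∑ p ∈ P, (e p + 1) :=
      Finset.sum_le_sum fun p _ => (hWcard p).trans_le (min_le_left _ _)
    rw [Finset.card_compl]
    omega
  have hE : ∀ x ∈ E, x ∉ D₀ ∧ ∀ p ∈ P, x ∉ W p := fun x hx => by
    simpa [not_or] using hEC hx
  refine ⟨D₀ ∪ E, ?_, fun p hp => ?_⟩
  · rw [Finset.card_union_of_disjoint (Finset.disjoint_right.mpr fun x hx => (hE x hx).1)]
    omega
  refine (h p hp).imp (fun hU => hU.trans Finset.subset_union_left) fun hlt => ?_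
  have hW : W p ⊆ U p \ (D₀ ∪ E) := fun x hx => by
    have := hWsub p hx
    simp only [Finset.mem_sdiff, Finset.mem_union, not_or] at this ⊢
    exact ⟨this.1, this.2, fun hxE => (hE x hxE).2 p hp hx⟩
  have := Finset.card_le_card hW
  rw [hWcard, min_eq_left hlt] at this
  omega

theorem exists_card_eq_forall_subset_or_lt_card_sdiff [Fintype α] {d : ℕ} (hd : ∑ p ∈ P, e p ≤ d)
    (hcard : d + ∑ p ∈ P, (e p + 1) ≤ Fintype.card α) :
    ∃ D : Finset α, #D = d ∧ ∀ p ∈ P, U p ⊆ D ∨ e p < #(U p \ D) :=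
  have ⟨_, hD₀, h⟩ := exists_card_le_forall_subset_or_lt_card_sdiff U e P
  exists_card_eq_of_card_le U e P (hD₀.trans hd) hcard h

end Discarding

lemma Omega_eq_card_primeFactors {n : ℕ} (hn : Squarefree n) : Omega n = #n.primeFactors := by
  rw [Omega, ← Nat.toFinset_factors, List.toFinset_card_of_nodup
    ((Nat.squarefree_iff_nodup_primeFactorsList hn.ne_zero).mp hn)]

lemma sum_primeFactors_mul_mod_three {n1 n2 : ℕ} (hsf : Squarefree (n1 * n2))
    (h1 : ∀ p : ℕ, p.Prime → p ∣ n1 → p % 3 = 1) (h2 : ∀ q : ℕ, q.Prime → q ∣ n2 → q % 3 = 2)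
    (f : ℕ → ℕ) :
    ∑ p ∈ (n1 * n2).primeFactors, f (p % 3) = f 1 * #n1.primeFactors + f 2 * #n2.primeFactors := by
  have hcop := Nat.coprime_of_squarefree_mul hsf
  have hs1 : ∑ p ∈ n1.primeFactors, f (p % 3) = ∑ _p ∈ n1.primeFactors, f 1 :=
    Finset.sum_congr rfl fun p hp => by
      rw [h1 p (Nat.prime_of_mem_primeFactors hp) (Nat.dvd_of_mem_primeFactors hp)]
  have hs2 : ∑ q ∈ n2.primeFactors, f (q % 3) = ∑ _q ∈ n2.primeFactors, f 2 :=
    Finset.sum_congr rfl fun q hq => by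
      rw [h2 q (Nat.prime_of_mem_primeFactors hq) (Nat.dvd_of_mem_primeFactors hq)]
  rw [hcop.primeFactors_mul, Finset.sum_union hcop.disjoint_primeFactors, hs1, hs2]
  simp [mul_comm]

theorem stmt9 (n n1 n2 : ℕ) (h : n = n1 * n2) (hsf : Squarefree n) (hodd : Odd n)
    (h7 : ¬ (7 ∣ n)) (h13 : ¬ (13 ∣ n))
    (h1 : ∀ p : ℕ, p.Prime → p ∣ n1 → p % 3 = 1)
    (h2 : ∀ q : ℕ, q.Prime → q ∣ n2 → q % 3 = 2)
    (m : ℕ) (hm : 3 * n1.primeFactors.card + 2 * n2.primeFactors.card ≤ m)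
    (x : Fin (m + 2 * Omega n1 + Omega n2) → ZMod n) :
    ∃ I : Finset (Fin (m + 2 * Omega n1 + Omega n2)), I.card = m ∧
      ∃ a : Fin (m + 2 * Omega n1 + Omega n2) → ZMod n,
        (∀ i ∈ I, a i ∈ Tset n) ∧ ∑ i ∈ I, a i * x i = 0 := by
  subst h
  have hsum := sum_primeFactors_mul_mod_three hsf h1 h2
  have hΩ1 := Omega_eq_card_primeFactors hsf.of_mul_left
  have hΩ2 := Omega_eq_card_primeFactors hsf.of_mul_right
  have he : ∑ p ∈ (n1 * n2).primeFactors, (if p % 3 = 1 then 2 else 1) =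
      2 * Omega n1 + Omega n2 :=
    (hsum fun r => if r = 1 then 2 else 1).trans (by simp [hΩ1, hΩ2, mul_comm])
  have he' : ∑ p ∈ (n1 * n2).primeFactors, ((if p % 3 = 1 then 2 else 1) + 1) ≤ m :=
    (hsum fun r => (if r = 1 then 2 else 1) + 1).trans_le (by simpa [mul_comm] using hm)
  set y : _ → ℕ := fun i => (x i).val
  obtain ⟨D, hD, hUD⟩ := exists_card_eq_forall_subset_or_lt_card_sdiff
    (fun p => univ.filter fun i => (y i : ZMod p) ≠ 0) (fun p => if p % 3 = 1 then 2 else 1)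
    (n1 * n2).primeFactors he.le (by simp only [Fintype.card_fin]; omega)
  obtain ⟨a, ha, hzero⟩ : HasCubeZeroSum (n1 * n2) Dᶜ y := by
    rw [← Nat.prod_primeFactors_of_squarefree hsf]
    refine .prod_primes (fun p hp => Nat.prime_of_mem_primeFactors hp) fun p hp => ?_
    have hpp := Nat.prime_of_mem_primeFactors hp
    have hdvd := Nat.dvd_of_mem_primeFactors hp
    exact .of_prime hpp (fun h => hodd.not_two_dvd_nat (h ▸ hdvd)) (fun h => h7 (h ▸ hdvd))
      (fun h => h13 (h ▸ hdvd)) ((hpp.dvd_mul.mp hdvd).imp (h1 p hpp) (h2 p hpp)) (hUD p hp)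
  refine ⟨Dᶜ, by rw [Finset.card_compl, Fintype.card_fin, hD]; omega, a, ha, ?_⟩
  have : NeZero (n1 * n2) := ⟨hsf.ne_zero⟩
  simpa [y, ZMod.natCast_zmod_val] using hzero
end
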